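/- arXiv:1106.4134 — 2 statements merged into one kernel-verified Lean document; each statement's English description precedes it below -/
import Mathlib

section
/- Let X be a finite abelian group and ξ_1,…,ξ_n (n ≥ 2) independent X-valued random variables with distributions μ_i such that all characteristic functions μ̂_i are nonnegative. Let α_{ij} ∈ Aut(X) with α_{1j} = α_{i1} = Id, and suppose that for some index k no proper subgroup of X contains the support of μ_k. If the linear forms L_j = Σ_{i=1}^n α_{ij} ξ_i, j = 1,…,n, are independent, then μ_i = m_X (the uniform distribution on X) for every i = 1,…,n. -/
/-- A probability distribution on a finite set, given by its mass function. -/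
def IsDist {X : Type*} [Fintype X] (μ : X → ℝ) : Prop :=
  (∀ x, 0 ≤ μ x) ∧ ∑ x, μ x = 1

/-- The characteristic function `μ̂(y) = ∑_x (x,y) μ({x})` of a distribution `μ`
on a finite abelian group `X`, where `y` is a character of `X`. -/
noncomputable def charFun {X : Type*} [AddCommGroup X] [Fintype X]
    (μ : X → ℝ) (y : AddChar X ℂ) : ℂ :=
  ∑ x, (μ x : ℂ) * y x

/-- The Haar (uniform) distribution `m_K` on a subgroup `K` of `X`. -/
noncomputable def haarDist {X : Type*} [AddCommGroup X] [Fintype X]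
    (K : AddSubgroup X) : X → ℝ :=
  (K : Set X).indicator fun _ => ((Nat.card K : ℝ))⁻¹

/-- The degenerate distribution `E_{x₀}` concentrated at `x₀`. -/
def diracDist {X : Type*} [DecidableEq X] (x₀ : X) : X → ℝ :=
  fun x => if x = x₀ then 1 else 0

/-- Convolution of two distributions on a finite abelian group. -/
noncomputable def convDist {X : Type*} [AddCommGroup X] [Fintype X]
    (μ ν : X → ℝ) : X → ℝ :=
  fun x => ∑ t, μ t * ν (x - t)

/-- `μ` is an idempotent distribution: a shift of the Haar distribution on a subgroup. -/
noncomputable def IsIdempotent {X : Type*} [AddCommGroup X] [Fintype X] [DecidableEq X]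
    (μ : X → ℝ) : Prop :=
  ∃ (K : AddSubgroup X) (x₀ : X), μ = convDist (haarDist K) (diracDist x₀)

/-- The linear forms `L_j = ∑_i A i j (ξ i)`, `j = 1,…,k`, of independent random
variables `ξ i` with distributions `μ i` are independent: the joint distribution of
`(L_1, …, L_k)` equals the product of the marginal distributions. -/
def FormsIndep {X : Type*} [AddCommGroup X] [Fintype X] [DecidableEq X] {n k : ℕ}
    (μ : Fin n → X → ℝ) (A : Fin n → Fin k → X → X) : Prop :=
  ∀ x : Fin k → X,
    (∑ t : Fin n → X, if (∀ j, ∑ i, A i j (t i) = x j) then ∏ i, μ i (t i) else 0) =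
    ∏ j, ∑ t : Fin n → X, if (∑ i, A i j (t i) = x j) then ∏ i, μ i (t i) else 0

/-- The adjoint `α̃` of an endomorphism `α` of `X`, acting on the character group:
`(α x, y) = (x, α̃ y)`. -/
noncomputable def adjChar {X : Type*} [AddCommGroup X] (α : X →+ X)
    (y : AddChar X ℂ) : AddChar X ℂ :=
  y.compAddMonoidHom α

/-! Write `φ_i = μ̂_i`; by assumption these are real with values in `[0,1]`, and the support
condition gives `φ_k(y) = 1` only for `y = 0`. Independence of the forms says that for all
characters `u_j`, `∏_i φ_i(∑_j α̃_ij u_j) = ∏_j ∏_i φ_i(α̃_ij u_j)`. Evaluated where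
`∑_j α̃_ij u_j = 0` for all `i`, this forces `u = 0`, so `u ↦ (∑_j α̃_ij u_j)_i` is a bijection of
the finite group of tuples of characters. Summing the identity over all `u` then gives
`∏_i S_i = ∏_j T_j` for the row sums `S_i = ∑_y φ_i(y)` and the column sums
`T_j = ∑_y ∏_i φ_i(α̃_ij y)`; since `T_j ≤ S_m` for all `j, m`, they are all equal. For the column
with `α̃_ij = id` this says `∏_i φ_i = φ_m` pointwise for every `m`, so `p = φ_m(y)` satisfies
`p ^ n = p`, whence `p ∈ {0, 1}`, and `p = 1` only at `y = 0`. So every `μ̂_i` is the indicator of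
the trivial character, and Fourier inversion gives `μ_i = m_X`. -/

open Finset Function

section RealProducts

variable {ι : Type*} [Fintype ι]

lemma prod_le_apply_of_le_one {f : ι → ℝ} (h0 : ∀ i, 0 ≤ f i) (h1 : ∀ i, f i ≤ 1) (i : ι) :
    ∏ j, f j ≤ f i := by
  classical
  simpa using prod_le_prod_of_subset_of_le_one (singleton_subset_iff.2 (mem_univ i))
    (fun j _ => h0 j) (fun j _ _ => h1 j)

lemma eq_of_le_of_prod_eq {f g : ι → ℝ} (hf : ∀ i, 0 < f i) (hfg : ∀ i, f i ≤ g i)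
    (h : ∏ i, f i = ∏ i, g i) : f = g := by
  by_contra hne
  obtain ⟨i, hi⟩ := Function.ne_iff.mp hne
  exact h.not_lt (prod_lt_prod (fun i _ => hf i) (fun i _ => hfg i)
    ⟨i, mem_univ i, (hfg i).lt_of_ne hi⟩)

lemma eq_of_forall_le_of_prod_eq {S T : ι → ℝ} (hT : ∀ j, 0 < T j) (hTS : ∀ i j, T j ≤ S i)
    (h : ∏ i, S i = ∏ j, T j) (i j : ι) : S i = T j := by
  have : Nonempty ι := ⟨i⟩
  obtain ⟨m, hm⟩ := Finite.exists_min S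
  have hSm : 0 < S m := (hT m).trans_le (hTS m m)
  have hTc : ∏ j, T j ≤ ∏ _j : ι, S m :=
    prod_le_prod (fun j _ => (hT j).le) (fun j _ => hTS m j)
  have hcS : ∏ _i : ι, S m ≤ ∏ i, S i := prod_le_prod (fun _ _ => hSm.le) (fun i _ => hm i)
  have hT_eq := eq_of_le_of_prod_eq hT (hTS m) (by linarith)
  have hS_eq := eq_of_le_of_prod_eq (fun _ => hSm) hm (by linarith)
  exact (congrFun hS_eq i).symm.trans (congrFun hT_eq j).symm

lemma eq_zero_or_eq_one_of_pow_eq_self {p : ℝ} (hp : 0 ≤ p) {m : ℕ} (hm : 2 ≤ m)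
    (h : p ^ m = p) : p = 0 ∨ p = 1 := by
  refine or_iff_not_imp_left.2 fun h0 => (pow_eq_one_iff_of_nonneg hp (by omega : m - 1 ≠ 0)).1 ?_
  refine mul_left_cancel₀ h0 ?_
  rw [← pow_succ', Nat.sub_add_cancel (by omega), h, mul_one]

end RealProducts

section ProductIdentity

variable {G ι : Type*} [AddCommGroup G] [Fintype ι]
  {F : ι → G → ℝ} {β : ι → ι → G →+ G}

lemma injective_sum_apply_of_prod_eq (h0 : ∀ i y, 0 ≤ F i y) (h1 : ∀ i y, F i y ≤ 1)
    (hF_zero : ∀ i, F i 0 = 1) (hβ : ∀ i j, Injective (β i j)) {k : ι}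
    (hk : ∀ y, F k y = 1 → y = 0)
    (hprod : ∀ u : ι → G, ∏ i, F i (∑ j, β i j (u j)) = ∏ j, ∏ i, F i (β i j (u j))) :
    Injective fun (u : ι → G) i => ∑ j, β i j (u j) := by
  let B : (ι → G) →+ (ι → G) :=
    AddMonoidHom.pi fun i => ∑ j, (β i j).comp (Pi.evalAddMonoidHom (fun _ => G) j)
  suffices Injective B by convert this using 1; ext u i; simp [B]
  refine (injective_iff_map_eq_zero B).2 fun u hu => funext fun j => ?_
  have hBu : ∀ i, ∑ j, β i j (u j) = 0 := fun i => by simpa [B] using congrFun hu i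
  have hone : ∏ j, ∏ i, F i (β i j (u j)) = 1 := by simp [← hprod, hBu, hF_zero]
  have hk_one : F k (β k j (u j)) = 1 := by
    refine le_antisymm (h1 _ _) ?_
    calc 1 = ∏ j, ∏ i, F i (β i j (u j)) := hone.symm
      _ ≤ ∏ i, F i (β i j (u j)) :=
        prod_le_apply_of_le_one (fun j => prod_nonneg fun i _ => h0 _ _)
          (fun j => prod_le_one (fun i _ => h0 _ _) fun i _ => h1 _ _) j
      _ ≤ F k (β k j (u j)) := prod_le_apply_of_le_one (fun i => h0 _ _) (fun i => h1 _ _) k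
  exact (injective_iff_map_eq_zero _).1 (hβ k j) _ (hk _ hk_one)

variable [Fintype G] [DecidableEq ι]

lemma prod_sum_eq_prod_sum_prod (hB : Bijective fun (u : ι → G) i => ∑ j, β i j (u j))
    (hprod : ∀ u : ι → G, ∏ i, F i (∑ j, β i j (u j)) = ∏ j, ∏ i, F i (β i j (u j))) :
    ∏ i, ∑ y, F i y = ∏ j, ∑ y, ∏ i, F i (β i j y) := by
  calc ∏ i, ∑ y, F i y = ∑ w : ι → G, ∏ i, F i (w i) := Fintype.prod_sum _
    _ = ∑ u : ι → G, ∏ i, F i (∑ j, β i j (u j)) :=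
      (Fintype.sum_bijective _ hB _ _ fun _ => rfl).symm
    _ = ∑ u : ι → G, ∏ j, ∏ i, F i (β i j (u j)) := sum_congr rfl fun u _ => hprod u
    _ = ∏ j, ∑ y, ∏ i, F i (β i j y) := (Fintype.prod_sum fun j y => ∏ i, F i (β i j y)).symm

lemma prod_apply_eq_apply_of_prod_eq (h0 : ∀ i y, 0 ≤ F i y) (h1 : ∀ i y, F i y ≤ 1)
    (hF_zero : ∀ i, F i 0 = 1) (hβ : ∀ i j, Injective (β i j)) {j₀ : ι}
    (hβ_id : ∀ i, β i j₀ = AddMonoidHom.id G) {k : ι} (hk : ∀ y, F k y = 1 → y = 0)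
    (hprod : ∀ u : ι → G, ∏ i, F i (∑ j, β i j (u j)) = ∏ j, ∏ i, F i (β i j (u j)))
    (m : ι) (y : G) : ∏ i, F i y = F m y := by
  have hB := Finite.injective_iff_bijective.1
    (injective_sum_apply_of_prod_eq h0 h1 hF_zero hβ hk hprod)
  have hcol_le_row : ∀ m j, ∑ y, ∏ i, F i (β i j y) ≤ ∑ y, F m y := fun m j =>
    calc ∑ y, ∏ i, F i (β i j y) ≤ ∑ y, F m (β m j y) := sum_le_sum fun y _ =>
        prod_le_apply_of_le_one (h0 · _) (h1 · _) m
      _ = ∑ y, F m y := Fintype.sum_bijective _ (Finite.injective_iff_bijective.1 (hβ m j)) _ _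
        fun _ => rfl
  have hcol_pos : ∀ j, 0 < ∑ y, ∏ i, F i (β i j y) := fun j =>
    calc (0 : ℝ) < ∏ i, F i (β i j 0) := by simp [hF_zero]
      _ ≤ ∑ y, ∏ i, F i (β i j y) :=
        single_le_sum (f := fun y => ∏ i, F i (β i j y))
          (fun y _ => prod_nonneg fun i _ => h0 _ _) (mem_univ 0)
  have hrow_eq_col := eq_of_forall_le_of_prod_eq hcol_pos hcol_le_row
    (prod_sum_eq_prod_sum_prod hB hprod) m j₀
  simp only [hβ_id, AddMonoidHom.id_apply] at hrow_eq_col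
  exact (sum_eq_sum_iff_of_le fun y _ => prod_le_apply_of_le_one (h0 · y) (h1 · y) m).1
    hrow_eq_col.symm y (mem_univ y)

lemma apply_eq_zero_of_prod_eq (hι : 2 ≤ Fintype.card ι) (h0 : ∀ i y, 0 ≤ F i y)
    (h1 : ∀ i y, F i y ≤ 1) (hF_zero : ∀ i, F i 0 = 1) (hβ : ∀ i j, Injective (β i j))
    {j₀ : ι} (hβ_id : ∀ i, β i j₀ = AddMonoidHom.id G) {k : ι} (hk : ∀ y, F k y = 1 → y = 0)
    (hprod : ∀ u : ι → G, ∏ i, F i (∑ j, β i j (u j)) = ∏ j, ∏ i, F i (β i j (u j)))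
    (m : ι) {y : G} (hy : y ≠ 0) : F m y = 0 := by
  have hF_eq := prod_apply_eq_apply_of_prod_eq h0 h1 hF_zero hβ hβ_id hk hprod
  have hpow : F m y ^ Fintype.card ι = F m y :=
    calc F m y ^ Fintype.card ι = ∏ _i : ι, F m y := by rw [prod_const, card_univ]
      _ = ∏ i, F i y := prod_congr rfl fun i _ => (hF_eq m y).symm.trans (hF_eq i y)
      _ = F m y := hF_eq m y
  refine (eq_zero_or_eq_one_of_pow_eq_self (h0 m y) hι hpow).resolve_right fun h => hy (hk y ?_)
  rw [← hF_eq k y, hF_eq m y, h]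

end ProductIdentity

lemma sum_fiber_mass_mul {ι Y : Type*} [Fintype ι] [Fintype Y] [DecidableEq Y] (L : ι → Y)
    (w : ι → ℝ) (f : Y → ℂ) :
    ∑ y, ((∑ t, if L t = y then w t else 0 : ℝ) : ℂ) * f y = ∑ t, (w t : ℂ) * f (L t) := by
  simp only [Complex.ofReal_sum, apply_ite Complex.ofReal, Complex.ofReal_zero, sum_mul,
    ite_mul, zero_mul]
  rw [sum_comm]
  simp

section Characters

variable {X : Type*} [AddCommGroup X]

lemma AddChar.map_sum_eq_prod {ι : Type*} (ψ : AddChar X ℂ) (s : Finset ι) (f : ι → X) :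
    ψ (∑ i ∈ s, f i) = ∏ i ∈ s, ψ (f i) := by
  induction s using Finset.cons_induction with
  | empty => simp
  | cons a s ha ih => rw [sum_cons, prod_cons, AddChar.map_add_eq_mul, ih]

noncomputable def adjCharHom (α : X →+ X) : AddChar X ℂ →+ AddChar X ℂ where
  toFun := adjChar α
  map_zero' := rfl
  map_add' _ _ := rfl

lemma adjChar_injective (e : X ≃+ X) : Injective (adjChar (e : X →+ X)) :=
  AddChar.compAddMonoidHom_injective_left _ e.surjective

variable [Fintype X]

lemma charFun_zero {μ : X → ℝ} (hμ : IsDist μ) : charFun μ 0 = 1 := by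
  simp [charFun, ← Complex.ofReal_sum, hμ.2]

lemma norm_charFun_le_one {μ : X → ℝ} (hμ : IsDist μ) (ψ : AddChar X ℂ) :
    ‖charFun μ ψ‖ ≤ 1 :=
  calc ‖charFun μ ψ‖ ≤ ∑ x, ‖(μ x : ℂ) * ψ x‖ := norm_sum_le _ _
    _ = ∑ x, μ x := by simp [AddChar.norm_apply, abs_of_nonneg (hμ.1 _)]
    _ = 1 := hμ.2

open ComplexOrder in
lemma eq_zero_of_charFun_eq_one {μ : X → ℝ} (hμ : IsDist μ)
    (hsupp : ∀ K : AddSubgroup X, {x | μ x ≠ 0} ⊆ (K : Set X) → K = ⊤) {ψ : AddChar X ℂ}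
    (h : charFun μ ψ = 1) : ψ = 0 := by
  have hre_le : ∀ x, (ψ x).re ≤ 1 := fun x =>
    (Complex.re_le_norm _).trans_eq (AddChar.norm_apply ψ x)
  have hsum : ∑ x, μ x * (1 - (ψ x).re) = 0 := by
    have hre : ∑ x, μ x * (ψ x).re = 1 := by
      simpa [charFun, Complex.re_sum] using congrArg Complex.re h
    simp [mul_sub, sum_sub_distrib, hμ.2, hre]
  have hsupp_ker : {x | μ x ≠ 0} ⊆ (ψ.toAddMonoidHom.ker : Set X) := by
    intro x hx
    have hx_re : (ψ x).re = 1 := by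
      have := (sum_eq_zero_iff_of_nonneg fun x _ =>
        mul_nonneg (hμ.1 x) (sub_nonneg.2 (hre_le x))).1 hsum x (mem_univ x)
      linarith [(mul_eq_zero.1 this).resolve_left hx]
    have hx_nonneg : 0 ≤ ψ x := Complex.re_eq_norm.1 (by rw [hx_re, AddChar.norm_apply])
    have hx_one : ψ x = 1 := by
      rw [Complex.eq_re_of_ofReal_le (z := ψ x) (r := 0) (by simpa using hx_nonneg), hx_re,
        Complex.ofReal_one]
    simp [hx_one]
  refine AddChar.eq_zero_iff.2 fun x => ?_
  have hx : x ∈ ψ.toAddMonoidHom.ker := (hsupp _ hsupp_ker).symm ▸ AddSubgroup.mem_top x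
  simpa using hx

lemma prod_charFun_eq_sum {n : ℕ} (μ : Fin n → X → ℝ) (ψ : Fin n → AddChar X ℂ) :
    ∏ i, charFun (μ i) (ψ i) = ∑ t : Fin n → X, ((∏ i, μ i (t i) : ℝ) : ℂ) * ∏ i, ψ i (t i) := by
  simp only [charFun, Fintype.prod_sum, Complex.ofReal_prod, prod_mul_distrib]

variable [DecidableEq X]

lemma FormsIndep.prod_charFun_sum_adjChar {n m : ℕ} {μ : Fin n → X → ℝ} {A : Fin n → Fin m → X →+ X}
    (hindep : FormsIndep μ fun i j => ⇑(A i j)) (y : Fin m → AddChar X ℂ) :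
    ∏ i, charFun (μ i) (∑ j, adjChar (A i j) (y j)) =
      ∏ j, ∏ i, charFun (μ i) (adjChar (A i j) (y j)) := by
  set w : (Fin n → X) → ℝ := fun t => ∏ i, μ i (t i)
  set L : (Fin n → X) → Fin m → X := fun t j => ∑ i, A i j (t i)
  have hform : ∀ j t, ∏ i, adjChar (A i j) (y j) (t i) = y j (L t j) := by
    simp [L, adjChar, AddChar.map_sum_eq_prod]
  calc ∏ i, charFun (μ i) (∑ j, adjChar (A i j) (y j))
      = ∑ t, (w t : ℂ) * ∏ j, y j (L t j) := by
        simp only [prod_charFun_eq_sum, AddChar.sum_apply]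
        refine sum_congr rfl fun t _ => ?_
        rw [prod_comm]
        simp only [hform, w]
    _ = ∑ x : Fin m → X, ((∑ t, if L t = x then w t else 0 : ℝ) : ℂ) * ∏ j, y j (x j) :=
        (sum_fiber_mass_mul L w fun x => ∏ j, y j (x j)).symm
    _ = ∑ x : Fin m → X, ∏ j, ((∑ t, if L t j = x j then w t else 0 : ℝ) : ℂ) * y j (x j) := by
        refine sum_congr rfl fun x _ => ?_
        have hjoint : (∑ t, if L t = x then w t else 0) =
            ∏ j, ∑ t, if L t j = x j then w t else 0 := by
          simp only [funext_iff]
          exact hindep x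
        rw [prod_mul_distrib, ← Complex.ofReal_prod, hjoint]
    _ = ∏ j, ∑ v, ((∑ t, if L t j = v then w t else 0 : ℝ) : ℂ) * y j v :=
        (Fintype.prod_sum fun j v => ((∑ t, if L t j = v then w t else 0 : ℝ) : ℂ) * y j v).symm
    _ = ∏ j, ∏ i, charFun (μ i) (adjChar (A i j) (y j)) := by
        refine prod_congr rfl fun j _ => ?_
        rw [sum_fiber_mass_mul (L · j), prod_charFun_eq_sum]
        simp only [hform, w]

lemma sum_charFun_mul_apply_neg (μ : X → ℝ) (x : X) :
    ∑ ψ : AddChar X ℂ, charFun μ ψ * ψ (-x) = Fintype.card X * μ x := by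
  simp only [charFun, sum_mul, mul_assoc, ← AddChar.map_add_eq_mul]
  rw [sum_comm]
  simp [← mul_sum, AddChar.sum_apply_eq_ite, ← sub_eq_add_neg, sub_eq_zero, mul_comm]

lemma eq_haarDist_top_of_charFun_eq_ite {μ : X → ℝ}
    (h : ∀ ψ, charFun μ ψ = if ψ = 0 then 1 else 0) : μ = haarDist ⊤ := by
  funext x
  have hx := sum_charFun_mul_apply_neg μ x
  simp only [h, ite_mul, one_mul, zero_mul, sum_ite_eq', mem_univ, if_true,
    AddChar.zero_apply] at hx
  simp only [haarDist, AddSubgroup.coe_top, Set.indicator_univ, AddSubgroup.card_top,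
    Nat.card_eq_fintype_card]
  exact eq_inv_of_mul_eq_one_right (by exact_mod_cast hx.symm)

end Characters

open ComplexOrder in
/-- Lemma 4: independent `ξ_i` with nonnegative characteristic
functions, `α_{ij} ∈ Aut(X)`, `α_{1j} = α_{i1} = Id`, and for some `k` no proper
subgroup of `X` contains the support of `μ_k`; if the forms `L_j = ∑_i α_{ij} ξ_i`
are independent then every `μ_i` is the Haar distribution `m_X`. -/
theorem stmt10 {X : Type*} [AddCommGroup X] [Fintype X] [DecidableEq X]
    (n : ℕ) (hn : 2 ≤ n)
    (μ : Fin n → X → ℝ) (hμ : ∀ i, IsDist (μ i))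
    (hpos : ∀ i y, 0 ≤ charFun (μ i) y)
    (α : Fin n → Fin n → (X ≃+ X))
    (hα2 : ∀ i, α i ⟨0, by omega⟩ = AddEquiv.refl X)
    (hsupp : ∃ k, ∀ K : AddSubgroup X, {x | μ k x ≠ 0} ⊆ (K : Set X) → K = ⊤)
    (hindep : FormsIndep μ (fun i j => ⇑(α i j))) :
    ∀ i, μ i = haarDist (⊤ : AddSubgroup X) := by
  obtain ⟨k, hk⟩ := hsupp
  obtain ⟨F, hF⟩ : ∃ F : Fin n → AddChar X ℂ → ℝ, ∀ i ψ, charFun (μ i) ψ = F i ψ :=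
    ⟨fun i ψ => (charFun (μ i) ψ).re, fun i ψ =>
      Complex.eq_re_of_ofReal_le (r := 0) (by simpa using hpos i ψ)⟩
  have hF_nonneg : ∀ i ψ, 0 ≤ F i ψ := fun i ψ => Complex.zero_le_real.1 (hF i ψ ▸ hpos i ψ)
  have hF_le : ∀ i ψ, F i ψ ≤ 1 := fun i ψ => by
    simpa [hF, Complex.norm_real, abs_of_nonneg (hF_nonneg i ψ)] using
      norm_charFun_le_one (hμ i) ψ
  have hF_zero : ∀ i, F i 0 = 1 := fun i => by
    exact_mod_cast (hF i 0).symm.trans (charFun_zero (hμ i))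
  have hFk : ∀ ψ, F k ψ = 1 → ψ = 0 := fun ψ h =>
    eq_zero_of_charFun_eq_one (hμ k) hk (by rw [hF, h, Complex.ofReal_one])
  have hprod : ∀ u : Fin n → AddChar X ℂ, ∏ i, F i (∑ j, adjCharHom (α i j : X →+ X) (u j)) =
      ∏ j, ∏ i, F i (adjCharHom (α i j : X →+ X) (u j)) := fun u => by
    have := hindep.prod_charFun_sum_adjChar (A := fun i j => (α i j : X →+ X)) u
    simp only [hF] at this
    exact_mod_cast this
  have hβ_id : ∀ i, adjCharHom (α i ⟨0, by omega⟩ : X →+ X) = AddMonoidHom.id _ := fun i => by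
    ext ψ x; simp [adjCharHom, adjChar, hα2]
  intro i
  refine eq_haarDist_top_of_charFun_eq_ite fun ψ => ?_
  split_ifs with hψ
  · rw [hψ, charFun_zero (hμ i)]
  · rw [hF, apply_eq_zero_of_prod_eq (by simpa using hn) hF_nonneg hF_le hF_zero
      (fun i j => adjChar_injective (α i j)) hβ_id hFk hprod i hψ, Complex.ofReal_zero]
end

section
/- Let p > 2 be a prime not dividing n, X = (Z/p)^n with dual Y ≅ (Z/p)^n, and e_1,…,e_n the standard basis of Y. For each i define μ_i on X by density ρ_i(x) = 1 + Re (x, e_i) with respect to the uniform distribution m_X. Then μ_i is a probability distribution, its characteristic function satisfies μ̂_i(0) = 1, μ̂_i(±e_i) = 1/2, and μ̂_i(y) = 0 for all other y ∈ Y, and μ_i is not an idempotent distribution. -/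
open Finset Matrix

namespace AddChar

theorem map_sum_eq_prod_s15 {A M ι : Type*} [AddCommMonoid A] [CommMonoid M] (ψ : AddChar A M)
    (s : Finset ι) (f : ι → A) : ψ (∑ j ∈ s, f j) = ∏ j ∈ s, ψ (f j) := by
  induction s using Finset.cons_induction with
  | empty => simp
  | cons a s _ ih => rw [sum_cons, prod_cons, map_add_eq_mul, ih]

theorem ofReal_re_apply {G : Type*} [AddCommGroup G] [Finite G] (ψ : AddChar G ℂ) (a : G) :
    ((ψ a).re : ℂ) = (ψ a + ψ (-a)) / 2 := by
  rw [map_neg_eq_conj, Complex.add_conj]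
  push_cast
  ring

variable {R ι : Type*} [CommRing R] [Fintype R] [DecidableEq R] [Fintype ι] [DecidableEq ι]

theorem sum_dotProduct_eq_ite {R' : Type*} [CommRing R'] [IsDomain R'] {ψ : AddChar R R'}
    (hψ : ψ.IsPrimitive) (c : ι → R) :
    ∑ x : ι → R, ψ (x ⬝ᵥ c) = if c = 0 then (Fintype.card (ι → R) : R') else 0 := by
  simp_rw [dotProduct, ψ.map_sum_eq_prod_s15]
  rw [← Fintype.prod_sum (fun j a => ψ (a * c j))]
  simp_rw [sum_mulShift _ hψ]
  split_ifs with hc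
  · simp [hc]
  · obtain ⟨j, hj⟩ := Function.ne_iff.mp hc
    exact prod_eq_zero (mem_univ j) (by simp_all)

end AddChar

section Density

variable {R ι : Type*} [CommRing R] [Fintype R] [Fintype ι] [DecidableEq ι]

theorem one_add_re_mul_dotProduct (ψ : AddChar R ℂ) (i : ι) (x c : ι → R) :
    (1 + (ψ (x i)).re : ℂ) * ψ (x ⬝ᵥ c) =
      ψ (x ⬝ᵥ c) + (ψ (x ⬝ᵥ (c + Pi.single i 1)) + ψ (x ⬝ᵥ (c - Pi.single i 1))) / 2 := by
  rw [ψ.ofReal_re_apply, dotProduct_add, dotProduct_sub, dotProduct_single, mul_one,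
    sub_eq_add_neg, AddChar.map_add_eq_mul, AddChar.map_add_eq_mul]
  ring

theorem sum_one_add_re_mul_dotProduct [DecidableEq R] (hR : (-1 : R) ≠ 1) {ψ : AddChar R ℂ}
    (hψ : ψ.IsPrimitive) (i : ι) (c : ι → R) :
    ∑ x : ι → R, (1 + (ψ (x i)).re : ℂ) / Fintype.card (ι → R) * ψ (x ⬝ᵥ c) =
      if c = 0 then 1 else if c = Pi.single i 1 ∨ c = -Pi.single i 1 then 1 / 2 else 0 := by
  have hN : (Fintype.card (ι → R) : ℂ) ≠ 0 := Nat.cast_ne_zero.2 Fintype.card_ne_zero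
  have : Nontrivial R := ⟨⟨-1, 1, hR⟩⟩
  have he : (Pi.single i 1 : ι → R) ≠ 0 := by simp
  have he' : (Pi.single i 1 : ι → R) ≠ -Pi.single i 1 := fun h ↦
    hR (by simpa using (congrFun h i).symm)
  simp_rw [div_mul_eq_mul_div, one_add_re_mul_dotProduct, ← sum_div, sum_add_distrib, ← sum_div,
    sum_add_distrib, AddChar.sum_dotProduct_eq_ite hψ, add_eq_zero_iff_eq_neg, sub_eq_zero]
  split_ifs <;> simp_all <;> field_simp

end Density

theorem convDist_diracDist {X : Type*} [AddCommGroup X] [Fintype X] [DecidableEq X]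
    (μ : X → ℝ) (x₀ x : X) : convDist μ (diracDist x₀) x = μ (x - x₀) := by
  rw [convDist, sum_eq_single (x - x₀)]
  · simp [diracDist]
  · intro t _ ht
    have : x - t ≠ x₀ := fun h => ht (by rw [← h, sub_sub_cancel])
    simp [diracDist, this]
  · simp

theorem haarDist_eq_of_pos {X : Type*} [AddCommGroup X] [Fintype X] {K : AddSubgroup X} {x : X}
    (h : 0 < haarDist K x) : haarDist K x = (Nat.card K : ℝ)⁻¹ := by
  by_cases hx : x ∈ K <;> simp_all [haarDist]

theorem IsIdempotent.eq_of_pos {X : Type*} [AddCommGroup X] [Fintype X] [DecidableEq X]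
    {μ : X → ℝ} (hμ : IsIdempotent μ) {x y : X} (hx : 0 < μ x) (hy : 0 < μ y) : μ x = μ y := by
  obtain ⟨K, x₀, rfl⟩ := hμ
  rw [convDist_diracDist] at hx hy ⊢
  rw [convDist_diracDist, haarDist_eq_of_pos hx, haarDist_eq_of_pos hy]

theorem IsPrimitiveRoot.abs_re_lt_one {ζ : ℂ} {k : ℕ} (hζ : IsPrimitiveRoot ζ k) (hk : 2 < k) :
    |ζ.re| < 1 := by
  rw [← hζ.norm'_eq_one (by omega), Complex.abs_re_lt_norm]
  intro him
  apply hζ.pow_ne_one_of_pos_of_lt two_ne_zero hk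
  calc ζ ^ 2 = ζ * (starRingEnd ℂ) ζ := by rw [sq, Complex.conj_eq_iff_im.2 him]
    _ = 1 := by simp [Complex.mul_conj', hζ.norm'_eq_one (by omega : k ≠ 0)]

section ZModDistribution

variable {n : ℕ}

noncomputable def reCharDist (p : ℕ) [NeZero p] (ζ : ℂ) (i : Fin n) (x : Fin n → ZMod p) : ℝ :=
  (1 + (ζ ^ (x i).val).re) * (Fintype.card (Fin n → ZMod p) : ℝ)⁻¹

variable {p : ℕ} [NeZero p] {ζ : ℂ}

theorem sum_reCharDist_mul_pow_val (hp2 : 2 < p) (hζ : IsPrimitiveRoot ζ p) (i : Fin n)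
    (c : Fin n → ZMod p) :
    ∑ x : Fin n → ZMod p, (reCharDist p ζ i x : ℂ) * ζ ^ (∑ j, x j * c j).val =
      if c = 0 then 1 else if c = Pi.single i 1 ∨ c = -Pi.single i 1 then 1 / 2 else 0 := by
  have : Fact (2 < p) := ⟨hp2⟩
  simp_rw [reCharDist, ← AddChar.zmodChar_apply hζ.pow_eq_one, ← div_eq_mul_inv]
  push_cast
  exact sum_one_add_re_mul_dotProduct ZMod.neg_one_ne_one
    (AddChar.zmodChar_primitive_of_primitive_root p hζ) i c

theorem isDist_reCharDist (hp2 : 2 < p) (hζ : IsPrimitiveRoot ζ p) (i : Fin n) :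
    IsDist (reCharDist p ζ i) := by
  refine ⟨fun x => ?_, ?_⟩
  · have hre : |(ζ ^ (x i).val).re| ≤ 1 := (Complex.abs_re_le_norm _).trans_eq <| by
      rw [norm_pow, hζ.norm'_eq_one (NeZero.ne p), one_pow]
    exact mul_nonneg (by linarith [neg_abs_le (ζ ^ (x i).val).re]) (by positivity)
  · exact_mod_cast (by simpa using sum_reCharDist_mul_pow_val hp2 hζ i 0 :
      ∑ x, (reCharDist p ζ i x : ℂ) = 1)

theorem not_isIdempotent_reCharDist (hp2 : 2 < p) (hζ : IsPrimitiveRoot ζ p) (i : Fin n) :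
    ¬IsIdempotent (reCharDist p ζ i) := by
  intro hid
  have hN : (0 : ℝ) < (Fintype.card (Fin n → ZMod p) : ℝ)⁻¹ := by positivity
  have hre := abs_lt.1 (hζ.abs_re_lt_one hp2)
  have h0 : reCharDist p ζ i 0 = 2 * (Fintype.card (Fin n → ZMod p) : ℝ)⁻¹ := by
    rw [reCharDist]; norm_num
  have he : reCharDist p ζ i (Pi.single i 1) =
      (1 + ζ.re) * (Fintype.card (Fin n → ZMod p) : ℝ)⁻¹ := by
    have : Fact (1 < p) := ⟨by omega⟩
    rw [reCharDist, Pi.single_eq_same, ZMod.val_one, pow_one]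
  have heq := hid.eq_of_pos (x := 0) (y := Pi.single i 1) (by rw [h0]; positivity)
    (by rw [he]; exact mul_pos (by linarith) hN)
  rw [h0, he] at heq
  linarith [mul_right_cancel₀ hN.ne' heq]

end ZModDistribution

theorem stmt15_general (n p : ℕ) [Fact p.Prime] (hp2 : 2 < p)
    (ζ : ℂ) (hζ : IsPrimitiveRoot ζ p)
    (μ : Fin n → (Fin n → ZMod p) → ℝ)
    (hμ : ∀ i x, μ i x =
      (1 + (ζ ^ (x i).val).re) * ((Fintype.card (Fin n → ZMod p) : ℝ))⁻¹) :
    (∀ i, IsDist (μ i)) ∧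
    (∀ (i : Fin n) (c : Fin n → ZMod p),
      (∑ x : Fin n → ZMod p, (μ i x : ℂ) * ζ ^ (∑ j, x j * c j).val) =
        if c = 0 then 1
        else if c = Pi.single i 1 ∨ c = -Pi.single i 1 then 1 / 2
        else 0) ∧
    (∀ i, ¬ IsIdempotent (μ i)) := by
  obtain rfl : μ = reCharDist p ζ := funext fun i => funext (hμ i)
  exact ⟨isDist_reCharDist hp2 hζ, sum_reCharDist_mul_pow_val hp2 hζ,
    not_isIdempotent_reCharDist hp2 hζ⟩

/-- on `X = (ℤ/p)^n` (`p > 2` prime, `p ∤ n`), the distribution `μ_i`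
with density `ρ_i(x) = 1 + Re (x, e_i)` with respect to `m_X` (where `(x, y)` is the
pairing `ζ ^ ∑ x_j y_j` for a primitive `p`-th root of unity `ζ`, and `e_i` the
standard basis of the dual) is a probability distribution, its characteristic function
is `1` at `0`, `1/2` at `±e_i` and `0` elsewhere, and `μ_i` is not idempotent. -/
theorem stmt15 (n p : ℕ) [Fact p.Prime] (hp2 : 2 < p) (hpn : ¬ p ∣ n)
    (ζ : ℂ) (hζ : IsPrimitiveRoot ζ p)
    (μ : Fin n → (Fin n → ZMod p) → ℝ)
    (hμ : ∀ i x, μ i x =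
      (1 + (ζ ^ (x i).val).re) * ((Fintype.card (Fin n → ZMod p) : ℝ))⁻¹) :
    (∀ i, IsDist (μ i)) ∧
    (∀ (i : Fin n) (c : Fin n → ZMod p),
      (∑ x : Fin n → ZMod p, (μ i x : ℂ) * ζ ^ (∑ j, x j * c j).val) =
        if c = 0 then 1
        else if c = Pi.single i 1 ∨ c = -Pi.single i 1 then 1 / 2
        else 0) ∧
    (∀ i, ¬ IsIdempotent (μ i)) :=
  stmt15_general n p hp2 ζ hζ μ hμ
end
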